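/- Let s be a real number with s + 1/2 > d/2. Then there is a constant C such that for all u, v in the Sobolev spaces indicated, ||u v||_{H^s} ≤ C ||u||_{H^{s+1/2}} ||v||_{H^s}. -/

import Mathlib

open MeasureTheory Real Set
open scoped ENNReal NNReal FourierTransform SchwartzMap

noncomputable section

abbrev Ed (d : ℕ) := EuclideanSpace ℝ (Fin d)

/-- The `H^s` Sobolev norm on `ℝ^d`, defined via the Fourier transform. -/
def sobolevNorm {d : ℕ} {F : Type*} [NormedAddCommGroup F] [NormedSpace ℂ F]
    (s : ℝ) (f : Ed d → F) : ℝ≥0∞ :=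
  (∫⁻ ξ : Ed d, ENNReal.ofReal ((1 + ‖ξ‖ ^ 2) ^ s) *
      (‖VectorFourier.fourierIntegral Real.fourierChar volume (innerₗ (Ed d)) f ξ‖₊ : ℝ≥0∞) ^ 2) ^ (1/2 : ℝ)

open scoped RealInnerProductSpace

namespace SobolevAux

variable {d : ℕ}

lemma fourier_schwartz_integrable (u : 𝓢(Ed d, ℂ)) : Integrable (𝓕 (⇑u)) := by
  have := (SchwartzMap.fourierTransformCLM ℂ u).integrable (μ := volume)
  exact (by simpa using this : Integrable ⇑(𝓕 u : 𝓢(Ed d, ℂ)) volume)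

lemma fourier_schwartz_continuous (u : 𝓢(Ed d, ℂ)) : Continuous (𝓕 (⇑u)) := by
  have := (SchwartzMap.fourierTransformCLM ℂ u).continuous
  exact (by simpa using this : Continuous ⇑(𝓕 u : 𝓢(Ed d, ℂ)))

lemma conv_formula (u v : 𝓢(Ed d, ℂ)) (ξ : Ed d) :
    𝓕 (fun x => u x * v x) ξ = ∫ η : Ed d, 𝓕 (⇑u) η * 𝓕 (⇑v) (ξ - η) := by
  have hFu_int := fourier_schwartz_integrable u
  have hinv : ∀ x, u x = ∫ η : Ed d,
      Complex.exp ((2 * π * ⟪η, x⟫ : ℝ) * Complex.I) * 𝓕 (⇑u) η := by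
    intro x
    conv_lhs => rw [← u.continuous.fourierInv_fourier_eq u.integrable hFu_int]
    rw [Real.fourierInv_eq']
    simp [smul_eq_mul]
  have hint : Integrable (fun p : Ed d × Ed d =>
      Complex.exp ((-2 * π * ⟪p.1, ξ⟫ : ℝ) * Complex.I) *
        (Complex.exp ((2 * π * ⟪p.2, p.1⟫ : ℝ) * Complex.I) * 𝓕 (⇑u) p.2) * v p.1)
      (volume.prod volume) := by
    have hb : Integrable (fun p : Ed d × Ed d => ‖v p.1‖ * ‖𝓕 (⇑u) p.2‖)
        (volume.prod volume) := (v.integrable.norm).mul_prod (hFu_int.norm)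
    refine hb.mono' ?_ ?_
    · apply Continuous.aestronglyMeasurable
      have h1 : Continuous fun p : Ed d × Ed d => ((-2 * π * ⟪p.1, ξ⟫ : ℝ) : ℂ) * Complex.I :=
        (Complex.continuous_ofReal.comp
          (continuous_const.mul (continuous_fst.inner continuous_const))).mul continuous_const
      have h2 : Continuous fun p : Ed d × Ed d => ((2 * π * ⟪p.2, p.1⟫ : ℝ) : ℂ) * Complex.I :=
        (Complex.continuous_ofReal.comp
          (continuous_const.mul (continuous_snd.inner continuous_fst))).mul continuous_const
      exact ((h1.cexp.mul ((h2.cexp).mul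
        ((fourier_schwartz_continuous u).comp continuous_snd))).mul
        (v.continuous.comp continuous_fst))
    · filter_upwards with p
      simp only [norm_mul, Complex.norm_exp_ofReal_mul_I, one_mul]
      rw [mul_comm]
  calc 𝓕 (fun x => u x * v x) ξ
      = ∫ x : Ed d, ∫ η : Ed d,
        Complex.exp ((-2 * π * ⟪x, ξ⟫ : ℝ) * Complex.I) *
          (Complex.exp ((2 * π * ⟪η, x⟫ : ℝ) * Complex.I) * 𝓕 (⇑u) η) * v x := by
        rw [Real.fourier_eq']
        congr 1; ext x
        rw [smul_eq_mul]
        conv_lhs => rw [hinv x]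
        rw [MeasureTheory.integral_mul_const, MeasureTheory.integral_const_mul, ← mul_assoc]
    _ = ∫ η : Ed d, ∫ x : Ed d,
        Complex.exp ((-2 * π * ⟪x, ξ⟫ : ℝ) * Complex.I) *
          (Complex.exp ((2 * π * ⟪η, x⟫ : ℝ) * Complex.I) * 𝓕 (⇑u) η) * v x :=
        MeasureTheory.integral_integral_swap hint
    _ = ∫ η : Ed d, 𝓕 (⇑u) η * 𝓕 (⇑v) (ξ - η) := by
        congr 1; ext η
        rw [Real.fourier_eq' (⇑v) (ξ - η), ← MeasureTheory.integral_const_mul]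
        congr 1; ext x
        have hab : Complex.exp ((-2 * π * ⟪x, ξ⟫ : ℝ) * Complex.I) *
            Complex.exp ((2 * π * ⟪η, x⟫ : ℝ) * Complex.I)
            = Complex.exp ((-2 * π * ⟪x, ξ - η⟫ : ℝ) * Complex.I) := by
          rw [← Complex.exp_add]
          congr 1
          rw [inner_sub_right, real_inner_comm η x]
          push_cast
          ring
        rw [smul_eq_mul, ← hab]
        ring

/-- The basic ENNReal-valued weight `1 + ‖ξ‖²`. -/
def eW (ξ : Ed d) : ℝ≥0∞ := ENNReal.ofReal (1 + ‖ξ‖ ^ 2)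

lemma eW_ne_zero (ξ : Ed d) : eW ξ ≠ 0 := by
  simp only [eW, ne_eq, ENNReal.ofReal_eq_zero, not_le]
  positivity

lemma eW_ne_top (ξ : Ed d) : eW ξ ≠ ⊤ := ENNReal.ofReal_ne_top

lemma one_le_eW (ξ : Ed d) : 1 ≤ eW ξ := by
  rw [eW, ← ENNReal.ofReal_one]
  exact ENNReal.ofReal_le_ofReal (le_add_of_nonneg_right (by positivity))

lemma measurable_eW : Measurable (eW : Ed d → ℝ≥0∞) :=
  ENNReal.measurable_ofReal.comp (continuous_const.add (continuous_norm.pow 2)).measurable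

lemma eW_rpow_ne_top (ξ : Ed d) (c : ℝ) : eW ξ ^ c ≠ ⊤ := by
  rcases le_or_gt 0 c with h | h
  · exact ENNReal.rpow_ne_top_of_nonneg h (eW_ne_top ξ)
  · rw [← neg_neg c, ENNReal.rpow_neg]
    exact ENNReal.inv_ne_top.2 (ENNReal.rpow_pos ((eW_ne_zero ξ).bot_lt) (eW_ne_top ξ)).ne'

lemma eW_eq (ξ : Ed d) (c : ℝ) :
    ENNReal.ofReal ((1 + ‖ξ‖ ^ 2) ^ c) = eW ξ ^ c :=
  (ENNReal.ofReal_rpow_of_pos (by positivity)).symm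

/-- The min trick: `a^(-α) b^(-β) ≤ a^(-(α+β)) + b^(-(α+β))`. -/
lemma rpow_neg_mul_le {a b : ℝ≥0∞} (ha1 : 1 ≤ a) (ha : a ≠ ⊤) (hb1 : 1 ≤ b) (hb : b ≠ ⊤)
    {α β : ℝ} (hα : 0 ≤ α) (hβ : 0 ≤ β) :
    a ^ (-α) * b ^ (-β) ≤ a ^ (-(α + β)) + b ^ (-(α + β)) := by
  have ha0 : a ≠ 0 := fun h => by simp [h] at ha1
  have hb0 : b ≠ 0 := fun h => by simp [h] at hb1
  rcases le_total a b with h | h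
  · have hba : b ^ (-β) ≤ a ^ (-β) := by
      rw [ENNReal.rpow_neg, ENNReal.rpow_neg]
      exact ENNReal.inv_le_inv' (ENNReal.rpow_le_rpow h hβ)
    calc a ^ (-α) * b ^ (-β) ≤ a ^ (-α) * a ^ (-β) := mul_le_mul_right hba _
      _ = a ^ (-(α + β)) := by
        rw [← ENNReal.rpow_add _ _ ha0 ha]; ring_nf
      _ ≤ _ := le_self_add
  · have hab : a ^ (-α) ≤ b ^ (-α) := by
      rw [ENNReal.rpow_neg, ENNReal.rpow_neg]
      exact ENNReal.inv_le_inv' (ENNReal.rpow_le_rpow h hα)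
    calc a ^ (-α) * b ^ (-β) ≤ b ^ (-α) * b ^ (-β) := mul_le_mul_left hab _
      _ = b ^ (-(α + β)) := by
        rw [← ENNReal.rpow_add _ _ hb0 hb]; ring_nf
      _ ≤ _ := le_add_self

lemma eW_peetre (ξ η : Ed d) : eW ξ ≤ 2 * (eW η + eW (ξ - η)) := by
  have h : ‖ξ‖ ≤ ‖η‖ + ‖ξ - η‖ := by
    calc ‖ξ‖ = ‖η + (ξ - η)‖ := by congr 1; abel
    _ ≤ _ := norm_add_le _ _
  calc eW ξ ≤ ENNReal.ofReal (2 * ((1 + ‖η‖ ^ 2) + (1 + ‖ξ - η‖ ^ 2))) := by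
        apply ENNReal.ofReal_le_ofReal
        nlinarith [norm_nonneg ξ, norm_nonneg η, norm_nonneg (ξ - η), sq_nonneg (‖η‖ - ‖ξ - η‖)]
    _ = 2 * (eW η + eW (ξ - η)) := by
        rw [ENNReal.ofReal_mul (by norm_num),
          ENNReal.ofReal_add (by positivity) (by positivity), ENNReal.ofReal_ofNat]
        rfl

lemma eW_rpow_peetre {s : ℝ} (hs0 : 0 ≤ s) (ξ η : Ed d) :
    eW ξ ^ s ≤ (4 : ℝ≥0∞) ^ s * (eW η ^ s + eW (ξ - η) ^ s) := by
  rcases le_total (eW η) (eW (ξ - η)) with h | h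
  · have h4 : eW ξ ≤ 4 * eW (ξ - η) := by
      refine (eW_peetre ξ η).trans ?_
      calc 2 * (eW η + eW (ξ - η)) ≤ 2 * (eW (ξ - η) + eW (ξ - η)) := by gcongr
        _ = 4 * eW (ξ - η) := by ring
    calc eW ξ ^ s ≤ (4 * eW (ξ - η)) ^ s := ENNReal.rpow_le_rpow h4 hs0
      _ = 4 ^ s * eW (ξ - η) ^ s := ENNReal.mul_rpow_of_nonneg _ _ hs0
      _ ≤ _ := by gcongr; exact le_add_self
  · have h4 : eW ξ ≤ 4 * eW η := by
      refine (eW_peetre ξ η).trans ?_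
      calc 2 * (eW η + eW (ξ - η)) ≤ 2 * (eW η + eW η) := by gcongr
        _ = 4 * eW η := by ring
    calc eW ξ ^ s ≤ (4 * eW η) ^ s := ENNReal.rpow_le_rpow h4 hs0
      _ = 4 ^ s * eW η ^ s := ENNReal.mul_rpow_of_nonneg _ _ hs0
      _ ≤ _ := by gcongr; exact le_self_add

lemma kernel_pointwise {s : ℝ} (hs0 : 0 ≤ s) (ξ η : Ed d) :
    eW ξ ^ s * (eW η ^ (-(s + 1/2)) * eW (ξ - η) ^ (-s)) ≤
      (4 : ℝ≥0∞) ^ s * ((eW η ^ (-(s + 1/2)) + eW (ξ - η) ^ (-(s + 1/2))) +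
        eW η ^ (-(s + 1/2))) := by
  have sub1 : eW η ^ s * (eW η ^ (-(s + 1/2)) * eW (ξ - η) ^ (-s)) ≤
      eW η ^ (-(s + 1/2)) + eW (ξ - η) ^ (-(s + 1/2)) := by
    have he : eW η ^ s * eW η ^ (-(s + 1/2)) = eW η ^ (-(1/2 : ℝ)) := by
      rw [← ENNReal.rpow_add _ _ (eW_ne_zero η) (eW_ne_top η)]
      ring_nf
    have := rpow_neg_mul_le (one_le_eW η) (eW_ne_top η) (one_le_eW (ξ - η)) (eW_ne_top (ξ - η))
      (α := 1/2) (β := s) (by norm_num) hs0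
    rw [show (1/2 + s : ℝ) = s + 1/2 by ring] at this
    calc eW η ^ s * (eW η ^ (-(s + 1/2)) * eW (ξ - η) ^ (-s))
        = eW η ^ (-(1/2 : ℝ)) * eW (ξ - η) ^ (-s) := by rw [← mul_assoc, he]
      _ ≤ _ := this
  have sub2 : eW (ξ - η) ^ s * (eW η ^ (-(s + 1/2)) * eW (ξ - η) ^ (-s)) =
      eW η ^ (-(s + 1/2)) := by
    have he : eW (ξ - η) ^ s * eW (ξ - η) ^ (-s) = 1 := by
      rw [← ENNReal.rpow_add _ _ (eW_ne_zero _) (eW_ne_top _), add_neg_cancel,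
        ENNReal.rpow_zero]
    calc eW (ξ - η) ^ s * (eW η ^ (-(s + 1/2)) * eW (ξ - η) ^ (-s))
        = (eW (ξ - η) ^ s * eW (ξ - η) ^ (-s)) * eW η ^ (-(s + 1/2)) := by ring
      _ = eW η ^ (-(s + 1/2)) := by rw [he, one_mul]
  calc eW ξ ^ s * (eW η ^ (-(s + 1/2)) * eW (ξ - η) ^ (-s))
      ≤ ((4 : ℝ≥0∞) ^ s * (eW η ^ s + eW (ξ - η) ^ s)) *
          (eW η ^ (-(s + 1/2)) * eW (ξ - η) ^ (-s)) :=
        mul_le_mul_left (eW_rpow_peetre hs0 ξ η) _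
    _ = (4 : ℝ≥0∞) ^ s * (eW η ^ s * (eW η ^ (-(s + 1/2)) * eW (ξ - η) ^ (-s))
          + eW (ξ - η) ^ s * (eW η ^ (-(s + 1/2)) * eW (ξ - η) ^ (-s))) := by ring
    _ ≤ _ := by
        rw [sub2]
        exact mul_le_mul_right (add_le_add_left sub1 _) _

lemma J_lt_top {s : ℝ} (hds : (d : ℝ) < 2 * s + 1) :
    (∫⁻ ζ : Ed d, eW ζ ^ (-(s + 1/2))) < ⊤ := by
  have hr : (0 : ℝ) < 2 * s + 1 := lt_of_le_of_lt (Nat.cast_nonneg d) hds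
  have hpt : ∀ ζ : Ed d, eW ζ ^ (-(s + 1/2)) ≤
      ENNReal.ofReal ((2 : ℝ) ^ ((2 * s + 1) / 2)) *
        ENNReal.ofReal ((1 + ‖ζ‖) ^ (-(2 * s + 1))) := by
    intro ζ
    rw [eW, ENNReal.ofReal_rpow_of_pos (by positivity),
      ← ENNReal.ofReal_mul (by positivity)]
    apply ENNReal.ofReal_le_ofReal
    have h := rpow_neg_one_add_norm_sq_le ζ (r := 2 * s + 1) hr
    rw [show -(s + 1/2) = -(2 * s + 1) / 2 by ring]
    exact h
  calc (∫⁻ ζ : Ed d, eW ζ ^ (-(s + 1/2)))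
      ≤ ∫⁻ ζ : Ed d, ENNReal.ofReal ((2 : ℝ) ^ ((2 * s + 1) / 2)) *
          ENNReal.ofReal ((1 + ‖ζ‖) ^ (-(2 * s + 1))) := lintegral_mono hpt
    _ = ENNReal.ofReal ((2 : ℝ) ^ ((2 * s + 1) / 2)) *
          ∫⁻ ζ : Ed d, ENNReal.ofReal ((1 + ‖ζ‖) ^ (-(2 * s + 1))) :=
        lintegral_const_mul' _ _ ENNReal.ofReal_ne_top
    _ < ⊤ := ENNReal.mul_lt_top ENNReal.ofReal_lt_top
        (finite_integral_one_add_norm (by simpa using hds))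

end SobolevAux

open SobolevAux

/-- if `s + 1/2 > d/2` then `‖uv‖_{H^s} ≤ C ‖u‖_{H^{s+1/2}} ‖v‖_{H^s}`. -/
theorem sobolev_product_estimate (d : ℕ) (hd : 1 ≤ d) (s : ℝ)
    (hs : s + 1/2 > (d : ℝ) / 2) :
    ∃ C : ℝ≥0, 0 < C ∧ ∀ u v : 𝓢(Ed d, ℂ),
      sobolevNorm s (fun x => u x * v x) ≤
        C * sobolevNorm (s + 1/2) (⇑u) * sobolevNorm s (⇑v) := by
  have hs0 : 0 ≤ s := by
    have h1 : (1 : ℝ) ≤ (d : ℝ) := by exact_mod_cast hd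
    linarith
  have hds : (d : ℝ) < 2 * s + 1 := by linarith
  have h4top : ((4 : ℝ≥0∞) ^ s) ≠ ⊤ := ENNReal.rpow_ne_top_of_nonneg hs0 (by norm_num)
  set J : ℝ≥0∞ := ∫⁻ ζ : Ed d, eW ζ ^ (-(s + 1/2)) with hJdef
  have hJtop : J ≠ ⊤ := (J_lt_top hds).ne
  set M : ℝ≥0∞ := (4 : ℝ≥0∞) ^ s * ((J + J) + J) with hMdef
  have hMtop : M ≠ ⊤ := ENNReal.mul_ne_top h4top (by simp [hJtop, ENNReal.add_ne_top])
  refine ⟨(M ^ (1/2 : ℝ)).toNNReal + 1, zero_lt_one.trans_le le_add_self, ?_⟩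
  have hCM : M ^ (1/2 : ℝ) ≤ (((M ^ (1/2 : ℝ)).toNNReal + 1 : ℝ≥0) : ℝ≥0∞) := by
    push_cast
    rw [ENNReal.coe_toNNReal (ENNReal.rpow_ne_top_of_nonneg (by norm_num) hMtop)]
    exact le_self_add
  have hnorm : ∀ (t : ℝ) (w : Ed d → ℂ), sobolevNorm t w =
      (∫⁻ ξ : Ed d, eW ξ ^ t * (‖𝓕 w ξ‖₊ : ℝ≥0∞) ^ 2) ^ (1/2 : ℝ) := by
    intro t w
    rw [sobolevNorm]
    congr 1
    exact lintegral_congr fun ξ => congrArg (· * _) (eW_eq ξ t)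
  have hsq : ∀ x : ℝ≥0∞, x ^ (2 : ℝ) = x ^ (2 : ℕ) := fun x => by
    rw [← ENNReal.rpow_natCast x 2]; norm_num
  have hhalfsq : ∀ x y : ℝ≥0∞, (x ^ (1/2 : ℝ) * y ^ (1/2 : ℝ)) ^ (2 : ℕ) = x * y := by
    intro x y
    rw [← hsq, ENNReal.mul_rpow_of_nonneg _ _ (by norm_num : (0:ℝ) ≤ 2),
      ← ENNReal.rpow_mul, ← ENNReal.rpow_mul]
    norm_num
  intro u v
  set f : Ed d → ℝ≥0∞ := fun η => (‖𝓕 (⇑u) η‖₊ : ℝ≥0∞) with hfdef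
  set g : Ed d → ℝ≥0∞ := fun η => (‖𝓕 (⇑v) η‖₊ : ℝ≥0∞) with hgdef
  have hfm : Measurable f :=
    (fourier_schwartz_continuous u).measurable.nnnorm.coe_nnreal_ennreal
  have hgm : Measurable g :=
    (fourier_schwartz_continuous v).measurable.nnnorm.coe_nnreal_ennreal
  set F : Ed d → ℝ≥0∞ := fun η => eW η ^ (s + 1/2) * f η ^ 2 with hFdef
  set G : Ed d → ℝ≥0∞ := fun η => eW η ^ s * g η ^ 2 with hGdef
  have hFm : Measurable F := (measurable_eW.pow_const _).mul (hfm.pow_const 2)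
  have hGm : Measurable G := (measurable_eW.pow_const _).mul (hgm.pow_const 2)
  have hFtop : ∀ η, F η ≠ ⊤ := fun η =>
    ENNReal.mul_ne_top (eW_rpow_ne_top η _) (by simp [hfdef, ENNReal.pow_ne_top])
  set A : ℝ≥0∞ := ∫⁻ η : Ed d, F η with hAdef
  set B : ℝ≥0∞ := ∫⁻ η : Ed d, G η with hBdef
  have hnu : sobolevNorm (s + 1/2) (⇑u) = A ^ (1/2 : ℝ) := by
    rw [hnorm (s + 1/2) (⇑u), hAdef]
  have hnv : sobolevNorm s (⇑v) = B ^ (1/2 : ℝ) := by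
    rw [hnorm s (⇑v), hBdef]
  -- Step 1: pointwise bound of the Fourier transform of the product by a convolution
  have step1 : ∀ ξ : Ed d, (‖𝓕 (fun x => u x * v x) ξ‖₊ : ℝ≥0∞) ≤
      ∫⁻ η : Ed d, f η * g (ξ - η) := by
    intro ξ
    rw [conv_formula u v ξ]
    calc (‖∫ η : Ed d, 𝓕 (⇑u) η * 𝓕 (⇑v) (ξ - η)‖₊ : ℝ≥0∞)
        ≤ ∫⁻ η : Ed d, ‖𝓕 (⇑u) η * 𝓕 (⇑v) (ξ - η)‖₊ :=
          enorm_integral_le_lintegral_enorm _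
      _ = ∫⁻ η : Ed d, f η * g (ξ - η) := by
          refine lintegral_congr fun η => ?_
          rw [nnnorm_mul, hfdef, hgdef]
          push_cast
          rfl
  -- Step 2: Cauchy-Schwarz
  have step2 : ∀ ξ : Ed d, (∫⁻ η : Ed d, f η * g (ξ - η)) ^ 2 ≤
      (∫⁻ η : Ed d, eW η ^ (-(s + 1/2)) * eW (ξ - η) ^ (-s)) *
        (∫⁻ η : Ed d, F η * G (ξ - η)) := by
    intro ξ
    have hconj : (2 : ℝ).HolderConjugate 2 := Real.HolderConjugate.two_two
    have hsub : Measurable fun η : Ed d => ξ - η := measurable_const.sub measurable_id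
    set φ : Ed d → ℝ≥0∞ :=
      fun η => eW η ^ (-((s + 1/2)/2)) * eW (ξ - η) ^ (-(s/2)) with hφdef
    set ψ : Ed d → ℝ≥0∞ :=
      fun η => (eW η ^ ((s + 1/2)/2) * f η) * (eW (ξ - η) ^ (s/2) * g (ξ - η)) with hψdef
    have hφm : Measurable φ := (measurable_eW.pow_const _).mul
      ((measurable_eW.comp hsub).pow_const _)
    have hψm : Measurable ψ := ((measurable_eW.pow_const _).mul hfm).mul
      (((measurable_eW.comp hsub).pow_const _).mul (hgm.comp hsub))
    have hcancel : ∀ η, f η * g (ξ - η) = (φ * ψ) η := by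
      intro η
      have h1 : eW η ^ (-((s + 1/2)/2)) * eW η ^ ((s + 1/2)/2) = 1 := by
        rw [← ENNReal.rpow_add _ _ (eW_ne_zero _) (eW_ne_top _), neg_add_cancel,
          ENNReal.rpow_zero]
      have h2 : eW (ξ - η) ^ (-(s/2)) * eW (ξ - η) ^ (s/2) = 1 := by
        rw [← ENNReal.rpow_add _ _ (eW_ne_zero _) (eW_ne_top _), neg_add_cancel,
          ENNReal.rpow_zero]
      calc f η * g (ξ - η)
          = (eW η ^ (-((s + 1/2)/2)) * eW η ^ ((s + 1/2)/2)) *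
              ((eW (ξ - η) ^ (-(s/2)) * eW (ξ - η) ^ (s/2)) * (f η * g (ξ - η))) := by
            rw [h1, h2, one_mul, one_mul]
        _ = (φ * ψ) η := by simp only [hφdef, hψdef, Pi.mul_apply]; ring
    have hφ2 : ∀ η, φ η ^ (2 : ℝ) = eW η ^ (-(s + 1/2)) * eW (ξ - η) ^ (-s) := by
      intro η
      simp only [hφdef]
      rw [ENNReal.mul_rpow_of_nonneg _ _ (by norm_num : (0:ℝ) ≤ 2),
        ← ENNReal.rpow_mul, ← ENNReal.rpow_mul]
      congr 1 <;> congr 1 <;> ring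
    have hψ2 : ∀ η, ψ η ^ (2 : ℝ) = F η * G (ξ - η) := by
      intro η
      simp only [hψdef, hFdef, hGdef]
      rw [ENNReal.mul_rpow_of_nonneg _ _ (by norm_num : (0:ℝ) ≤ 2),
        ENNReal.mul_rpow_of_nonneg _ _ (by norm_num : (0:ℝ) ≤ 2),
        ENNReal.mul_rpow_of_nonneg _ _ (by norm_num : (0:ℝ) ≤ 2),
        ← ENNReal.rpow_mul, ← ENNReal.rpow_mul, hsq, hsq]
      congr 2 <;> · congr 1; ring
    have hCS := ENNReal.lintegral_mul_le_Lp_mul_Lq volume hconj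
      hφm.aemeasurable hψm.aemeasurable
    calc (∫⁻ η : Ed d, f η * g (ξ - η)) ^ 2
        = (∫⁻ η : Ed d, (φ * ψ) η) ^ 2 := by rw [lintegral_congr hcancel]
      _ ≤ ((∫⁻ η : Ed d, φ η ^ (2:ℝ)) ^ (1/(2:ℝ)) *
            (∫⁻ η : Ed d, ψ η ^ (2:ℝ)) ^ (1/(2:ℝ))) ^ 2 := pow_le_pow_left' hCS 2
      _ = (∫⁻ η : Ed d, φ η ^ (2:ℝ)) * (∫⁻ η : Ed d, ψ η ^ (2:ℝ)) := hhalfsq _ _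
      _ = _ := by rw [lintegral_congr hφ2, lintegral_congr hψ2]
  -- Step 3: uniform bound for the weighted kernel integral
  have step3 : ∀ ξ : Ed d,
      eW ξ ^ s * (∫⁻ η : Ed d, eW η ^ (-(s + 1/2)) * eW (ξ - η) ^ (-s)) ≤ M := by
    intro ξ
    have hsub : Measurable fun η : Ed d => ξ - η := measurable_const.sub measurable_id
    have hma : Measurable fun η : Ed d => eW η ^ (-(s + 1/2)) := measurable_eW.pow_const _
    have hmb : Measurable fun η : Ed d => eW (ξ - η) ^ (-(s + 1/2)) :=
      (measurable_eW.comp hsub).pow_const _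
    rw [← lintegral_const_mul' _ _ (eW_rpow_ne_top ξ s)]
    calc ∫⁻ η : Ed d, eW ξ ^ s * (eW η ^ (-(s + 1/2)) * eW (ξ - η) ^ (-s))
        ≤ ∫⁻ η : Ed d, (4 : ℝ≥0∞) ^ s *
            ((eW η ^ (-(s + 1/2)) + eW (ξ - η) ^ (-(s + 1/2))) + eW η ^ (-(s + 1/2))) :=
          lintegral_mono fun η => kernel_pointwise hs0 ξ η
      _ = (4 : ℝ≥0∞) ^ s * ((J + ∫⁻ η : Ed d, eW (ξ - η) ^ (-(s + 1/2))) + J) := by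
          rw [lintegral_const_mul' _ _ h4top, lintegral_add_left (f := fun η => eW η ^ (-(s + 1/2)) + eW (ξ - η) ^ (-(s + 1/2)))
              (hma.add hmb),
            lintegral_add_left hma]
      _ = M := by
          rw [(MeasureTheory.Measure.measurePreserving_sub_left volume ξ).lintegral_comp
            (measurable_eW.pow_const _)]
  -- Step 4: Tonelli
  have swap : (∫⁻ ξ : Ed d, ∫⁻ η : Ed d, F η * G (ξ - η)) = A * B := by
    rw [lintegral_lintegral_swap
      ((hFm.comp measurable_snd).mul (hGm.comp (measurable_fst.sub measurable_snd))).aemeasurable]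
    calc ∫⁻ η : Ed d, ∫⁻ ξ : Ed d, F η * G (ξ - η)
        = ∫⁻ η : Ed d, F η * ∫⁻ ξ : Ed d, G (ξ - η) :=
          lintegral_congr fun η => lintegral_const_mul' _ _ (hFtop η)
      _ = ∫⁻ η : Ed d, F η * B := by
          refine lintegral_congr fun η => ?_
          rw [lintegral_sub_right_eq_self G η]
      _ = A * B := lintegral_mul_const B hFm
  -- Main estimate
  have main : (∫⁻ ξ : Ed d, eW ξ ^ s * (‖𝓕 (fun x => u x * v x) ξ‖₊ : ℝ≥0∞) ^ 2) ≤
      M * (A * B) := by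
    calc (∫⁻ ξ : Ed d, eW ξ ^ s * (‖𝓕 (fun x => u x * v x) ξ‖₊ : ℝ≥0∞) ^ 2)
        ≤ ∫⁻ ξ : Ed d, M * ∫⁻ η : Ed d, F η * G (ξ - η) := by
          refine lintegral_mono fun ξ => ?_
          calc eW ξ ^ s * (‖𝓕 (fun x => u x * v x) ξ‖₊ : ℝ≥0∞) ^ 2
              ≤ eW ξ ^ s * (∫⁻ η : Ed d, f η * g (ξ - η)) ^ 2 :=
                mul_le_mul_right (pow_le_pow_left' (step1 ξ) 2) _
            _ ≤ eW ξ ^ s * ((∫⁻ η : Ed d, eW η ^ (-(s + 1/2)) * eW (ξ - η) ^ (-s)) *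
                  (∫⁻ η : Ed d, F η * G (ξ - η))) := mul_le_mul_right (step2 ξ) _
            _ = (eW ξ ^ s * (∫⁻ η : Ed d, eW η ^ (-(s + 1/2)) * eW (ξ - η) ^ (-s))) *
                  (∫⁻ η : Ed d, F η * G (ξ - η)) := (mul_assoc _ _ _).symm
            _ ≤ M * ∫⁻ η : Ed d, F η * G (ξ - η) := mul_le_mul_left (step3 ξ) _
      _ = M * ∫⁻ ξ : Ed d, ∫⁻ η : Ed d, F η * G (ξ - η) := lintegral_const_mul' _ _ hMtop
      _ = M * (A * B) := by rw [swap]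
  rw [hnorm s (fun x => u x * v x), hnu, hnv]
  calc (∫⁻ ξ : Ed d, eW ξ ^ s * (‖𝓕 (fun x => u x * v x) ξ‖₊ : ℝ≥0∞) ^ 2) ^ (1/2 : ℝ)
      ≤ (M * (A * B)) ^ (1/2 : ℝ) := ENNReal.rpow_le_rpow main (by norm_num)
    _ = M ^ (1/2 : ℝ) * (A ^ (1/2 : ℝ) * B ^ (1/2 : ℝ)) := by
        rw [ENNReal.mul_rpow_of_nonneg M (A * B) (by norm_num : (0:ℝ) ≤ 1/2),
          ENNReal.mul_rpow_of_nonneg A B (by norm_num : (0:ℝ) ≤ 1/2)]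
    _ ≤ (((M ^ (1/2 : ℝ)).toNNReal + 1 : ℝ≥0) : ℝ≥0∞) * (A ^ (1/2 : ℝ) * B ^ (1/2 : ℝ)) :=
        mul_le_mul_left hCM _
    _ = _ := by ring
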